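/- Let A = {1,…,k} with k ≥ 3 and n ≥ k+1, and let f : Aⁿ → {0,1} map a to 1 iff the multiset of entries of a is {1^{n-k+1}, 2, …, k} and the entries ≠ 1 appear in increasing order. Then there is no function f' : A* → {0,1} and permutation σ ∈ Sₙ with f(a) = f'(ofo(a∘σ)) for all a ∈ Aⁿ. -/

import Mathlib

/-- `ofo` maps a string to the subsequence retaining only the first occurrence of each symbol. -/
def ofo {A : Type*} [DecidableEq A] : List A → List A
  | [] => []
  | a :: l => a :: ofo (l.filter (· ≠ a))
termination_by l => l.length
decreasing_by
  simp only [List.length_cons]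
  exact Nat.lt_succ_of_le
    (List.length_unattach.trans_le ((List.length_filter_le _ _).trans List.length_attach.le))

/-- `goodTuple k n a` says the content of `a` consists of `n - (k+3) + 1` occurrences of `0`
together with exactly one occurrence of every other element of `Fin (k+3)`, and the entries
distinct from `0` appear in `a` in increasing order. (Here the alphabet `A = Fin (k+3)`
plays the role of `{1, …, k}` with `k ≥ 3`, the element `0` playing the role of `1`.) -/
def goodTuple (k n : ℕ) (a : Fin n → Fin (k+3)) : Prop :=
  (↑(List.ofFn a) : Multiset (Fin (k+3))) =
      Multiset.replicate (n - (k+3) + 1) 0 + ((Finset.univ : Finset (Fin (k+3))).erase 0).val ∧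
    List.Pairwise (· < ·) ((List.ofFn a).filter (· ≠ 0))

/-! Let `p = σ (last)` be the position that `σ` moves to the end, and take a good tuple `a` with
`a p = 0`. Setting `a p := 1` destroys goodness, since `1` then occurs twice, but leaves
`ofo (a ∘ σ)` unchanged: the last letter of a word only matters for `ofo` when it is new, and both
`0` (which occurs `n - k - 2 ≥ 2` times) and `1` already occur at other positions. -/

open Finset Function

theorem List.count_ofFn {α : Type*} [DecidableEq α] {n : ℕ} (a : Fin n → α) (v : α) :
    (List.ofFn a).count v = #{i | a i = v} := by
  simpa [List.Vector.get] using
    (Fin.card_filter_univ_eq_vector_get_eq_count v ⟨List.ofFn a, List.length_ofFn⟩).symm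

section ofo

variable {A : Type*} [DecidableEq A]

theorem ofo_append_singleton_of_mem {x : A} : ∀ {l : List A}, x ∈ l → ofo (l ++ [x]) = ofo l
  | a :: l, h => by
    rw [List.cons_append, ofo, ofo, List.filter_append]
    rcases eq_or_ne x a with rfl | hxa
    · simp
    · have hx : x ∈ l.filter (· ≠ a) :=
        List.mem_filter.2 ⟨(List.mem_cons.1 h).resolve_left hxa, by simpa⟩
      rw [List.filter_singleton, decide_eq_true hxa, cond_true, ofo_append_singleton_of_mem hx]
termination_by l => l.length
decreasing_by exact Nat.lt_succ_of_le (List.length_filter_le _ _)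

theorem ofo_ofFn_eq_ofo_ofFn_init {m : ℕ} (g : Fin (m + 1) → A)
    (h : ∃ j ≠ Fin.last m, g j = g (Fin.last m)) :
    ofo (List.ofFn g) = ofo (List.ofFn (Fin.init g)) := by
  obtain ⟨j, hj, hgj⟩ := h
  obtain ⟨i, rfl⟩ := Fin.exists_castSucc_eq.2 hj
  rw [List.ofFn_succ', List.concat_eq_append]
  exact ofo_append_singleton_of_mem (List.mem_ofFn.2 ⟨i, hgj⟩)

theorem ofo_ofFn_comp_update_eq {m : ℕ} (a : Fin (m + 1) → A) (σ : Equiv.Perm (Fin (m + 1)))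
    (x : A) (hold : ∃ j ≠ σ (Fin.last m), a j = a (σ (Fin.last m)))
    (hnew : ∃ j ≠ σ (Fin.last m), a j = x) :
    ofo (List.ofFn (a ∘ σ)) = ofo (List.ofFn (update a (σ (Fin.last m)) x ∘ σ)) := by
  have hinit : Fin.init (update a (σ (Fin.last m)) x ∘ σ) = Fin.init (a ∘ σ) := by
    funext i
    exact update_of_ne (σ.injective.ne (Fin.castSucc_ne_last i)) _ _
  have hlast (j : Fin (m + 1)) (hj : j ≠ σ (Fin.last m)) : σ.symm j ≠ Fin.last m := by
    intro h
    exact hj (by rw [← h, Equiv.apply_symm_apply])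
  obtain ⟨j, hj, haj⟩ := hold
  obtain ⟨j', hj', haj'⟩ := hnew
  rw [ofo_ofFn_eq_ofo_ofFn_init _ ⟨σ.symm j, hlast j hj, by simpa using haj⟩,
    ofo_ofFn_eq_ofo_ofFn_init _ ⟨σ.symm j', hlast j' hj', by simp [update_of_ne hj', haj']⟩,
    hinit]

end ofo

section placeSucc

variable {m n : ℕ} (e : Fin m ↪o Fin n)

noncomputable def placeSucc : Fin n → Fin (m + 1) := extend e Fin.succ 0

theorem placeSucc_apply (i : Fin m) : placeSucc e (e i) = i.succ :=
  e.injective.extend_apply _ _ i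

theorem placeSucc_eq_zero_iff (j : Fin n) : placeSucc e j = 0 ↔ j ∉ Set.range e := by
  constructor
  · rintro h ⟨i, rfl⟩
    exact Fin.succ_ne_zero i (by rwa [placeSucc_apply] at h)
  · exact fun h => extend_apply' _ _ _ (by simpa using h)

theorem placeSucc_eq_succ_iff (j : Fin n) (i : Fin m) : placeSucc e j = i.succ ↔ e i = j := by
  constructor
  · intro h
    obtain ⟨i', rfl⟩ : j ∈ Set.range e := by
      by_contra hj
      exact Fin.succ_ne_zero i (h ▸ (placeSucc_eq_zero_iff e j).2 hj)
    rw [placeSucc_apply, Fin.succ_inj] at h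
    rw [h]
  · rintro rfl
    exact placeSucc_apply e i

theorem card_placeSucc_eq (v : Fin (m + 1)) :
    #{j | placeSucc e j = v} = if v = 0 then n - m else 1 := by
  split_ifs with hv
  · subst hv
    have : ({j | placeSucc e j = 0} : Finset (Fin n)) = (univ.map e.toEmbedding)ᶜ := by
      ext j
      simp [placeSucc_eq_zero_iff]
    rw [this, card_compl, card_map, card_univ, Fintype.card_fin, Fintype.card_fin]
  · obtain ⟨i, rfl⟩ := Fin.exists_succ_eq.2 hv
    simp_rw [placeSucc_eq_succ_iff, filter_eq, mem_univ, if_true, card_singleton]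

theorem pairwise_lt_filter_ne_zero_ofFn_placeSucc :
    ((List.ofFn (placeSucc e)).filter (· ≠ 0)).Pairwise (· < ·) := by
  rw [List.pairwise_filter, List.pairwise_ofFn]
  intro j j' hjj' hj hj'
  obtain ⟨i, hi⟩ := Fin.exists_succ_eq.2 (of_decide_eq_true hj)
  obtain ⟨i', hi'⟩ := Fin.exists_succ_eq.2 (of_decide_eq_true hj')
  rw [← hi, ← hi', Fin.succ_lt_succ_iff]
  rw [eq_comm, placeSucc_eq_succ_iff] at hi hi'
  rw [← hi, ← hi'] at hjj'
  exact e.lt_iff_lt.1 hjj'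

end placeSucc

theorem coe_ofFn_eq_replicate_add_erase_iff {α : Type*} [DecidableEq α] [Fintype α] {n : ℕ}
    (a : Fin n → α) (z : α) (c : ℕ) :
    (↑(List.ofFn a) : Multiset α) = Multiset.replicate c z + (univ.erase z).val ↔
      ∀ v, #{j | a j = v} = if v = z then c else 1 := by
  rw [Multiset.ext]
  refine forall_congr' fun v => ?_
  rw [Multiset.coe_count, List.count_ofFn, Multiset.count_add, Multiset.count_replicate,
    Multiset.count_eq_of_nodup (univ.erase z).nodup]
  simp only [mem_val, mem_erase, mem_univ, and_true]
  rcases eq_or_ne v z with rfl | hv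
  · simp
  · simp [hv, hv.symm]

section goodTuple

variable {k n : ℕ}

theorem goodTuple_placeSucc (hn : k + 3 ≤ n) (e : Fin (k + 2) ↪o Fin n) :
    goodTuple k n (placeSucc e) := by
  refine ⟨(coe_ofFn_eq_replicate_add_erase_iff _ _ _).2 fun v => ?_,
    pairwise_lt_filter_ne_zero_ofFn_placeSucc e⟩
  rw [card_placeSucc_eq]
  split_ifs <;> omega

theorem exists_goodTuple_apply_eq_zero (hn : k + 3 ≤ n) (p : Fin n) :
    ∃ a, goodTuple k n a ∧ a p = 0 := by
  obtain ⟨s, hsp, hs⟩ : ∃ s ⊆ univ.erase p, #s = k + 2 := exists_subset_card_eq <| by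
    rw [card_erase_of_mem (mem_univ p), card_univ, Fintype.card_fin]
    omega
  refine ⟨placeSucc (s.orderEmbOfFin hs), goodTuple_placeSucc hn _, ?_⟩
  rw [placeSucc_eq_zero_iff, range_orderEmbOfFin]
  exact fun hp => (mem_erase.1 (hsp hp)).1 rfl

variable {a : Fin n → Fin (k + 3)}

theorem goodTuple.card_filter_apply_eq (h : goodTuple k n a) (v : Fin (k + 3)) :
    #{j | a j = v} = if v = 0 then n - (k + 3) + 1 else 1 :=
  (coe_ofFn_eq_replicate_add_erase_iff a 0 _).1 h.1 v

theorem goodTuple.exists_apply_eq (h : goodTuple k n a) (v : Fin (k + 3)) : ∃ j, a j = v := by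
  have : 0 < #{j | a j = v} := by
    rw [h.card_filter_apply_eq]
    split_ifs <;> omega
  obtain ⟨j, hj⟩ := card_pos.1 this
  exact ⟨j, (mem_filter.1 hj).2⟩

theorem goodTuple.exists_ne_apply_eq_zero (h : goodTuple k n a) (hn : k + 4 ≤ n) (p : Fin n) :
    ∃ j ≠ p, a j = 0 := by
  have : 1 < #{j | a j = 0} := by
    rw [h.card_filter_apply_eq, if_pos rfl]
    omega
  obtain ⟨j, hj, hjp⟩ := exists_mem_ne this p
  exact ⟨j, hjp, (mem_filter.1 hj).2⟩

theorem goodTuple.not_goodTuple_update (h : goodTuple k n a) {p : Fin n} {v : Fin (k + 3)}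
    (hp : a p ≠ v) (hv : v ≠ 0) : ¬ goodTuple k n (update a p v) := by
  intro hupd
  obtain ⟨j, hj⟩ := h.exists_apply_eq v
  have hjp : j ≠ p := by
    rintro rfl
    exact hp hj
  have hsub : {p, j} ⊆ ({i | update a p v i = v} : Finset (Fin n)) := by
    simp [insert_subset_iff, update_of_ne hjp, hj]
  have := card_le_card hsub
  rw [card_pair hjp.symm, hupd.card_filter_apply_eq, if_neg hv] at this
  omega

end goodTuple

/-- for `|A| = k + 3 ≥ 3` and `n ≥ (k+3) + 1`, the `{0,1}`-valued function `f`
taking value `1` exactly on the good tuples is not similar to any function determined by the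
order of first occurrence: there are no `f' : A* → {0,1}` and `σ ∈ Sₙ` with
`f(a) = f'(ofo(a ∘ σ))` for all `a ∈ Aⁿ`. -/
theorem stmt11 (k n : ℕ) (hn : k + 4 ≤ n) (f : (Fin n → Fin (k+3)) → Fin 2)
    (hf : ∀ a : Fin n → Fin (k+3),
      (goodTuple k n a → f a = 1) ∧ (¬ goodTuple k n a → f a = 0)) :
    ¬ ∃ (f' : List (Fin (k+3)) → Fin 2) (σ : Equiv.Perm (Fin n)),
        ∀ a : Fin n → Fin (k+3), f a = f' (ofo (List.ofFn (a ∘ ⇑σ))) := by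
  rintro ⟨f', σ, hsim⟩
  obtain ⟨m, rfl⟩ : ∃ m, n = m + 1 := ⟨n - 1, by omega⟩
  set p := σ (Fin.last m)
  obtain ⟨a, ha, hap⟩ := exists_goodTuple_apply_eq_zero (k := k) (by omega) p
  obtain ⟨j, hj⟩ := ha.exists_apply_eq 1
  have hjp : j ≠ p := by
    rintro rfl
    exact zero_ne_one (hap.symm.trans hj)
  have hofo : ofo (List.ofFn (a ∘ σ)) = ofo (List.ofFn (update a p 1 ∘ σ)) :=
    ofo_ofFn_comp_update_eq a σ 1 (hap ▸ ha.exists_ne_apply_eq_zero hn p) ⟨j, hjp, hj⟩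
  have hgood : f a = 1 := (hf a).1 ha
  have hbad : f (update a p 1) = 0 :=
    (hf _).2 (ha.not_goodTuple_update (hap ▸ zero_ne_one) one_ne_zero)
  rw [hsim, hofo, ← hsim, hbad] at hgood
  exact zero_ne_one hgood
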